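/- Suppose that for all finite simple graphs G and H without isolated vertices, all canonical minimum dominating sets D_G ⊆ V(G), D_H ⊆ V(H), and all adjacency-respecting surjections F_G : V(G) − D_G → D_G and F_H : V(H) − D_H → D_H, the set D_G × D_H is a minimum dominating set of the adjoint graph A_{G,H}[F_G,F_H]. Then Vizing's conjecture holds: γ(G)·γ(H) ≤ γ(G□H) for all finite simple graphs G and H without isolated vertices. -/

import Mathlib

/-! The adjoint graph contains `G □ H`, so `γ(A_{G,H}) ≤ γ(G □ H)`, and the hypothesis gives
`γ(A_{G,H}) = γ(G)·γ(H)` as soon as its data exist. They do for graphs without isolated vertices: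
such a graph has a canonical minimum dominating set (Bollobás–Cockayne), and for a canonical
dominating set every choice of dominators is onto. -/

/-- `D` is a dominating set of `G`: every vertex outside `D` has a neighbor in `D`. -/
def Dominates {α : Type*} (G : SimpleGraph α) (D : Finset α) : Prop :=
  ∀ v ∉ D, ∃ u ∈ D, G.Adj u v

/-- The domination number `γ(G)`: the minimum cardinality of a dominating set. -/
noncomputable def gamma {α : Type*} (G : SimpleGraph α) : ℕ :=
  sInf {n : ℕ | ∃ D : Finset α, Dominates G D ∧ D.card = n}

/-- `v` is a private neighbor of `u` with respect to `D`:
`v ∉ D`, `u ∼ v`, and `N(v) ∩ D = {u}`. -/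
def PrivateNbr {α : Type*} (G : SimpleGraph α) (D : Finset α) (u v : α) : Prop :=
  v ∉ D ∧ G.Adj u v ∧ ∀ w ∈ D, G.Adj w v → w = u

/-- `D` is canonical: every member of `D` has at least one private neighbor. -/
def Canonical {α : Type*} (G : SimpleGraph α) (D : Finset α) : Prop :=
  ∀ u ∈ D, ∃ v, PrivateNbr G D u v

/-- The map `S` on `V(G □ H) − D_G × D_H`:
`S(u,v) = (u, F_H v)` if `u ∈ D_G` (and then necessarily `v ∉ D_H`),
`S(u,v) = (F_G u, v)` if `u ∉ D_G` and `v ∈ D_H`, and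
`S(u,v) = (F_G u, F_H v)` if `u ∉ D_G` and `v ∉ D_H`. -/
def Svert {α β : Type*} [DecidableEq α] [DecidableEq β] (DG : Finset α) (DH : Finset β)
    (FG : α → α) (FH : β → β) (p : α × β) : α × β :=
  if p.1 ∈ DG then (p.1, FH p.2)
  else if p.2 ∈ DH then (FG p.1, p.2)
  else (FG p.1, FH p.2)

/-- The adjoint graph `A_{G,H}[F_G,F_H]`: the Cartesian product `G □ H` together with the
added edges `E_S = {{(u,v), (F_G u, F_H v)} : u ∉ D_G, v ∉ D_H}`. -/
def adjointGraph {α β : Type*} (G : SimpleGraph α) (H : SimpleGraph β)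
    (DG : Finset α) (DH : Finset β) (FG : α → α) (FH : β → β) : SimpleGraph (α × β) :=
  G.boxProd H ⊔ SimpleGraph.fromRel (fun p q => p.1 ∉ DG ∧ p.2 ∉ DH ∧ q = (FG p.1, FH p.2))

section Domination

variable {α : Type*} {G : SimpleGraph α}

lemma Dominates.mono {G' : SimpleGraph α} (hle : G ≤ G') {D : Finset α} (hD : Dominates G D) :
    Dominates G' D := fun v hv =>
  let ⟨u, hu, huv⟩ := hD v hv
  ⟨u, hu, hle huv⟩

lemma gamma_le_card {D : Finset α} (hD : Dominates G D) : gamma G ≤ D.card :=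
  Nat.sInf_le ⟨D, hD, rfl⟩

lemma exists_dominates_card_eq_gamma [Finite α] :
    ∃ D : Finset α, Dominates G D ∧ D.card = gamma G := by
  have := Fintype.ofFinite α
  have hne : {n | ∃ D : Finset α, Dominates G D ∧ D.card = n}.Nonempty :=
    ⟨_, Finset.univ, fun v hv => absurd (Finset.mem_univ v) hv, rfl⟩
  exact Nat.sInf_mem hne

lemma gamma_anti [Finite α] {G' : SimpleGraph α} (hle : G ≤ G') : gamma G' ≤ gamma G := by
  obtain ⟨D, hD, hcard⟩ := exists_dominates_card_eq_gamma (G := G)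
  exact hcard ▸ gamma_le_card (hD.mono hle)

lemma Dominates.insert_erase [DecidableEq α] {D : Finset α} (hD : Dominates G D) {u w : α}
    (hu : ∀ v, ¬PrivateNbr G D u v) (hwu : G.Adj w u) : Dominates G (insert w (D.erase u)) := by
  intro v hv
  simp only [Finset.mem_insert, Finset.mem_erase, not_or, not_and_or, not_not] at hv
  obtain ⟨hvw, hvu | hvD⟩ := hv
  · exact ⟨w, Finset.mem_insert_self _ _, hvu ▸ hwu⟩
  obtain ⟨y, hyD, hyv⟩ := hD v hvD
  by_cases hyu : y = u
  · subst hyu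
    have hshared : ∃ z ∈ D, G.Adj z v ∧ z ≠ y := by
      simpa [PrivateNbr, hvD, hyv] using hu v
    obtain ⟨z, hzD, hzv, hzy⟩ := hshared
    exact ⟨z, Finset.mem_insert_of_mem (Finset.mem_erase.2 ⟨hzy, hzD⟩), hzv⟩
  · exact ⟨y, Finset.mem_insert_of_mem (Finset.mem_erase.2 ⟨hyu, hyD⟩), hyv⟩

open Classical in
noncomputable def selfDominated (G : SimpleGraph α) (D : Finset α) : Finset α :=
  D.filter fun x => ∃ y ∈ D, G.Adj y x

lemma selfDominated_ssubset_insert_erase [DecidableEq α] {D : Finset α} {u w z : α}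
    (hu : ∀ y ∈ D, ¬G.Adj y u) (hwD : w ∉ D) (hzD : z ∈ D) (hzu : z ≠ u) (hzw : G.Adj z w) :
    selfDominated G D ⊂ selfDominated G (insert w (D.erase u)) := by
  have hmem : ∀ x ∈ D, x ≠ u → x ∈ insert w (D.erase u) := fun x hx hxu =>
    Finset.mem_insert_of_mem (Finset.mem_erase.2 ⟨hxu, hx⟩)
  refine Finset.ssubset_iff_of_subset (fun x hx => ?_) |>.2 ⟨w, ?_, ?_⟩
  · simp only [selfDominated, Finset.mem_filter] at hx ⊢
    obtain ⟨hxD, y, hyD, hyx⟩ := hx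
    have hxu : x ≠ u := by rintro rfl; exact hu y hyD hyx
    have hyu : y ≠ u := by rintro rfl; exact hu x hxD hyx.symm
    exact ⟨hmem x hxD hxu, y, hmem y hyD hyu, hyx⟩
  · simp only [selfDominated, Finset.mem_filter]
    exact ⟨Finset.mem_insert_self _ _, z, hmem z hzD hzu, hzw⟩
  · simp only [selfDominated, Finset.mem_filter]
    exact fun h => hwD h.1

/-- Among the minimum dominating sets, one with the most members dominated from inside is
canonical: a member `u` without private neighbour could be deleted if it has a neighbour in `D`,
and otherwise traded for a neighbour `w`, which increases the number of such members. -/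
lemma exists_canonical_dominates_card_eq_gamma [Finite α] (hG : ∀ v, ∃ w, G.Adj v w) :
    ∃ D : Finset α, Dominates G D ∧ Canonical G D ∧ D.card = gamma G := by
  classical
  have := Fintype.ofFinite α
  obtain ⟨D₀, hD₀⟩ := exists_dominates_card_eq_gamma (G := G)
  obtain ⟨D, hDmin, hmax⟩ := (Finset.univ.filter fun D => Dominates G D ∧ D.card = gamma G)
    |>.exists_max_image (fun D => (selfDominated G D).card) ⟨D₀, by simpa using hD₀⟩
  simp only [Finset.mem_filter, Finset.mem_univ, true_and, and_imp] at hDmin hmax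
  obtain ⟨hD, hcard⟩ := hDmin
  refine ⟨D, hD, fun u huD => ?_, hcard⟩
  by_contra! hnopriv
  by_cases hinner : ∃ y ∈ D, G.Adj y u
  · obtain ⟨y, hyD, hyu⟩ := hinner
    have hsmaller := gamma_le_card (hD.insert_erase hnopriv hyu)
    rw [Finset.insert_eq_of_mem (Finset.mem_erase.2 ⟨G.ne_of_adj hyu, hyD⟩),
      Finset.card_erase_of_mem huD] at hsmaller
    have : 0 < D.card := Finset.card_pos.2 ⟨u, huD⟩
    omega
  · push Not at hinner
    obtain ⟨w, huw⟩ := hG u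
    have hwD : w ∉ D := fun hwD => hinner w hwD huw.symm
    have hshared : ∃ z ∈ D, G.Adj z w ∧ z ≠ u := by
      simpa [PrivateNbr, hwD, huw] using hnopriv w
    obtain ⟨z, hzD, hzw, hzu⟩ := hshared
    have hcard' : (insert w (D.erase u)).card = D.card := by
      rw [Finset.card_insert_of_notMem (fun h => hwD (Finset.mem_of_mem_erase h)),
        Finset.card_erase_add_one huD]
    have hle := hmax _ (hD.insert_erase hnopriv huw.symm) (hcard'.trans hcard)
    exact (Finset.card_lt_card
      (selfDominated_ssubset_insert_erase hinner hwD hzD hzu hzw)).not_ge hle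

/-- A private neighbour of `w` has no dominator other than `w`. -/
lemma Canonical.exists_dominator_surj {D : Finset α} (hD : Dominates G D) (hc : Canonical G D) :
    ∃ F : α → α, (∀ v ∉ D, F v ∈ D ∧ G.Adj (F v) v) ∧ (∀ w ∈ D, ∃ v, v ∉ D ∧ F v = w) := by
  choose! F hFD hFadj using hD
  refine ⟨F, fun v hv => ⟨hFD v hv, hFadj v hv⟩, fun w hw => ?_⟩
  obtain ⟨v, hvD, -, huniq⟩ := hc w hw
  exact ⟨v, hvD, huniq _ (hFD v hvD) (hFadj v hvD)⟩

end Domination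

theorem vizing_of_conjecture.{u}
    (hyp : ∀ (α β : Type u) [Fintype α] [Fintype β] [DecidableEq α] [DecidableEq β]
      (G : SimpleGraph α) (H : SimpleGraph β),
      (∀ v : α, ∃ w : α, G.Adj v w) → (∀ v : β, ∃ w : β, H.Adj v w) →
      ∀ (DG : Finset α) (DH : Finset β),
        Dominates G DG → Dominates H DH →
        Canonical G DG → Canonical H DH →
        DG.card = gamma G → DH.card = gamma H →
        ∀ (FG : α → α) (FH : β → β),
          (∀ u ∉ DG, FG u ∈ DG ∧ G.Adj (FG u) u) →
          (∀ w ∈ DG, ∃ u, u ∉ DG ∧ FG u = w) →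
          (∀ v ∉ DH, FH v ∈ DH ∧ H.Adj (FH v) v) →
          (∀ w ∈ DH, ∃ v, v ∉ DH ∧ FH v = w) →
          Dominates (adjointGraph G H DG DH FG FH) (DG ×ˢ DH) ∧
            gamma (adjointGraph G H DG DH FG FH) = (DG ×ˢ DH).card) :
    ∀ (α β : Type u) [Fintype α] [Fintype β] (G : SimpleGraph α) (H : SimpleGraph β),
      (∀ v : α, ∃ w : α, G.Adj v w) → (∀ v : β, ∃ w : β, H.Adj v w) →
      gamma G * gamma H ≤ gamma (G.boxProd H) := by
  intro α β _ _ G H hG hH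
  classical
  obtain ⟨DG, hDG, hcG, hcardG⟩ := exists_canonical_dominates_card_eq_gamma hG
  obtain ⟨DH, hDH, hcH, hcardH⟩ := exists_canonical_dominates_card_eq_gamma hH
  obtain ⟨FG, hFG, hFGsurj⟩ := hcG.exists_dominator_surj hDG
  obtain ⟨FH, hFH, hFHsurj⟩ := hcH.exists_dominator_surj hDH
  obtain ⟨-, hgamma⟩ := hyp α β G H hG hH DG DH hDG hDH hcG hcH hcardG hcardH FG FH
    hFG hFGsurj hFH hFHsurj
  calc gamma G * gamma H = (DG ×ˢ DH).card := by rw [Finset.card_product, hcardG, hcardH]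
    _ = gamma (adjointGraph G H DG DH FG FH) := hgamma.symm
    _ ≤ gamma (G.boxProd H) := gamma_anti le_sup_left
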